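/- arXiv:2110.00430 — 2 statements merged into one kernel-verified Lean document; each statement's English description precedes it below -/
import Mathlib

section
/- On an integrable highest weight module of level ℓ over the affine Lie algebra ĝ of a simple Lie algebra g, the Sugawara operators satisfy the Virasoro relations [L_m, L_n] = (m-n)L_{m+n} + (c_v/12)(m³-m)δ_{m+n,0}, where c_v = ℓ·dim(g)/(ℓ + h∨(g)) is the central charge. -/
/-!
STATEMENT 6: On an integrable highest weight module of level `ℓ` over the affine
Lie algebra `ĝ` of a simple Lie algebra `g`, the Sugawara operators
`L_n = (1/2(ℓ+h∨)) ∑_{m∈ℤ} ∑_a :Jᵃ(m)Jᵃ(n-m):` satisfy the Virasoro relations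
`[L_m, L_n] = (m-n) L_{m+n} + (c_v/12)(m³-m) δ_{m+n,0}`, with central charge
`c_v = ℓ·dim g/(ℓ+h∨(g))`.

The module is encoded by operators `ρ X m` (the action of `X⊗tᵐ`) satisfying the
affine commutation relations at level `ℓ` and smoothness (local vanishing); `h∨` is
characterized by the adjoint Casimir identity `∑_a [Jᵃ,[Jᵃ,X]] = 2h∨·X`.
-/

/-- The normally ordered term `:Jᵃ(m)Jᵃ(n-m):` applied to `v` (the operator with the
larger Fourier index acts first). -/
noncomputable def NOterm {g H : Type*} [LieRing g] [LieAlgebra ℂ g]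
    [AddCommGroup H] [Module ℂ H] (ρ : g → ℤ → Module.End ℂ H)
    {d : ℕ} (J : Fin d → g) (a : Fin d) (m n : ℤ) (v : H) : H :=
  if m ≤ n - m then ρ (J a) m (ρ (J a) (n - m) v)
  else ρ (J a) (n - m) (ρ (J a) m v)

/-- The Sugawara operator `L_n = c • ∑_{m∈ℤ} ∑_a :Jᵃ(m)Jᵃ(n-m):` applied to a
vector, where `c = 1/2(ℓ+h∨)`. -/
noncomputable def sugawara {g H : Type*} [LieRing g] [LieAlgebra ℂ g]
    [AddCommGroup H] [Module ℂ H] (ρ : g → ℤ → Module.End ℂ H)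
    {d : ℕ} (J : Fin d → g) (c : ℂ) (n : ℤ) (v : H) : H :=
  c • ∑ᶠ m : ℤ, ∑ a : Fin d, NOterm ρ J a m n v

/-!
Smoothness makes the Sugawara sum `Sₙ = ∑ₘ ∑ₐ :Jᵃ(m)Jᵃ(n-m):` finite on each vector, so all
computations take place on a window `m ∈ (-M, M]` with `M` large. Commuting a current `Jᵇ(k)`
through `Sₙ` produces `F(m+k) - F(m)` with `F(m) = ∑ₐ Jᵃ(m)[Jᵃ,Jᵇ](n+k-m)` (invariance of the
Casimir tensor), which telescopes to the boundary of the window, where `F = 2h∨ Jᵇ(n+k)` by the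
Casimir identity; with the two central terms this gives `[Jᵇ(k), Sₙ] = 2(ℓ+h∨) k Jᵇ(n+k)`.
Using this twice inside `S_p` gives `[S_p, S_q] = 2(ℓ+h∨)(p-q) S_{p+q}` up to a boundary term of
the shifted window and the normal-ordering correction, which add up to the cubic central term.
-/

open Finset Filter

section InvariantForm

variable {R g : Type*} [CommRing R] [LieRing g] [LieAlgebra R g] {κ : LinearMap.BilinForm R g}

theorem bilin_lie_self_right (hinv : ∀ X Y Z : g, κ ⁅X, Y⁆ Z = κ X ⁅Y, Z⁆) (X Y : g) :
    κ X ⁅X, Y⁆ = 0 := by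
  rw [← hinv, lie_self, map_zero, LinearMap.zero_apply]

theorem bilin_lie_eq_neg (hsymm : ∀ X Y : g, κ X Y = κ Y X)
    (hinv : ∀ X Y Z : g, κ ⁅X, Y⁆ Z = κ X ⁅Y, Z⁆) (X Y Z : g) :
    κ ⁅X, Y⁆ Z = -κ ⁅Z, Y⁆ X := by
  rw [hinv, ← lie_skew, map_neg, hsymm X]

variable {ι : Type*} [Fintype ι] [DecidableEq ι] {J : Module.Basis ι R g}

theorem sum_bilin_smul_basis (hON : ∀ a b, κ (J a) (J b) = if a = b then 1 else 0) (X : g) :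
    ∑ c, κ X (J c) • J c = X := by
  have hrepr (c : ι) : κ X (J c) = J.repr X c := by
    conv_lhs => rw [← J.sum_repr X]
    simp only [map_sum, map_smul, LinearMap.sum_apply, LinearMap.smul_apply, hON, smul_eq_mul,
      mul_ite, mul_one, mul_zero, sum_ite_eq', mem_univ, if_true]
  simpa only [hrepr] using J.sum_repr X

/-- The Casimir tensor `∑ₐ Jᵃ ⊗ Jᵃ` is invariant under the adjoint action. -/
theorem sum_lie_basis_eq_neg {E : Type*} [AddCommGroup E] [Module R E]
    (hsymm : ∀ X Y : g, κ X Y = κ Y X) (hinv : ∀ X Y Z : g, κ ⁅X, Y⁆ Z = κ X ⁅Y, Z⁆)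
    (hON : ∀ a b, κ (J a) (J b) = if a = b then 1 else 0)
    (B : g →ₗ[R] g →ₗ[R] E) (Y : g) :
    ∑ a, B ⁅J a, Y⁆ (J a) = -∑ a, B (J a) ⁅J a, Y⁆ := by
  have hleft (X Z : g) : B X Z = ∑ c, κ X (J c) • B (J c) Z := by
    conv_lhs => rw [← sum_bilin_smul_basis hON X]
    simp only [map_sum, map_smul, LinearMap.sum_apply, LinearMap.smul_apply]
  have hright (X Z : g) : B X Z = ∑ c, κ Z (J c) • B X (J c) := by
    conv_lhs => rw [← sum_bilin_smul_basis hON Z]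
    simp only [map_sum, map_smul]
  calc ∑ a, B ⁅J a, Y⁆ (J a) = ∑ a, ∑ c, κ ⁅J a, Y⁆ (J c) • B (J c) (J a) :=
        sum_congr rfl fun a _ => hleft _ _
    _ = ∑ c, ∑ a, -(κ ⁅J c, Y⁆ (J a) • B (J c) (J a)) := by
        rw [sum_comm]
        exact sum_congr rfl fun c _ => sum_congr rfl fun a _ => by
          rw [bilin_lie_eq_neg hsymm hinv, neg_smul]
    _ = -∑ a, B (J a) ⁅J a, Y⁆ := by
        simp only [sum_neg_distrib, ← hright]

end InvariantForm

section IntervalSums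

variable {E : Type*} [AddCommGroup E]

theorem sum_Ioc_add_sum_Ioc (f : ℤ → E) {a b c : ℤ} (hab : a ≤ b) (hbc : b ≤ c) :
    ∑ m ∈ Ioc a b, f m + ∑ m ∈ Ioc b c, f m = ∑ m ∈ Ioc a c, f m := by
  rw [← Ioc_union_Ioc_eq_Ioc hab hbc, sum_union (Ioc_disjoint_Ioc_of_le le_rfl)]

theorem sum_Ioc_sub_sub_one (Φ : ℤ → E) {a b : ℤ} (hab : a ≤ b) :
    ∑ m ∈ Ioc a b, (Φ m - Φ (m - 1)) = Φ b - Φ a := by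
  induction b, hab using Int.leInduction with
  | base => simp
  | succ b hab ih =>
    rw [← insert_Ioc_right_eq_Ioc_add_one hab, sum_insert (by simp), ih, add_sub_cancel_right]
    abel

theorem sum_Ioc_comp_add (f : ℤ → E) (a b k : ℤ) :
    ∑ m ∈ Ioc a b, f (m + k) = ∑ m ∈ Ioc (a + k) (b + k), f m := by
  rw [← map_add_right_Ioc, sum_map]
  rfl

theorem sum_Ioc_eq_of_eq_zero_of_eq_sub {f Φ : ℤ → E} {B T : ℤ} (hBT : B ≤ T)
    (hbot : ∀ m ≤ B, f m = 0) (htop : ∀ m, T < m → f m = Φ m - Φ (m - 1))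
    {a b : ℤ} (ha : a ≤ B) (hb : T ≤ b) :
    ∑ m ∈ Ioc a b, f m = ∑ m ∈ Ioc B T, f m + (Φ b - Φ T) := by
  rw [← sum_Ioc_add_sum_Ioc f ha (hBT.trans hb), ← sum_Ioc_add_sum_Ioc f hBT hb,
    sum_eq_zero fun m hm => hbot m (mem_Ioc.1 hm).2, zero_add,
    sum_congr rfl fun m hm => htop m (mem_Ioc.1 hm).1, sum_Ioc_sub_sub_one Φ hb]

theorem eventually_sum_Ioc_comp_add_sub {f Φ : ℤ → E} (hbot : ∀ᶠ m in atBot, f m = 0)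
    (htop : ∀ᶠ m in atTop, f m = Φ m - Φ (m - 1)) (k : ℤ) :
    ∀ᶠ M in atTop, ∑ m ∈ Ioc (-M) M, f (m + k) - ∑ m ∈ Ioc (-M) M, f m = Φ (M + k) - Φ M := by
  obtain ⟨B, hB⟩ := eventually_atBot.1 hbot
  obtain ⟨T, hT⟩ := eventually_atTop.1 htop
  have key {a b : ℤ} (ha : a ≤ min B T) (hb : T ≤ b) :=
    sum_Ioc_eq_of_eq_zero_of_eq_sub (min_le_right B T)
      (fun m hm => hB m (hm.trans (min_le_left B T))) (fun m hm => hT m hm.le) ha hb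
  filter_upwards [eventually_ge_atTop (T + |k|), eventually_ge_atTop (|k| - min B T)]
    with M hMT hMB
  have hk₁ := le_abs_self k
  have hk₂ := neg_abs_le k
  rw [sum_Ioc_comp_add, key (a := -M + k) (by omega) (by omega),
    key (a := -M) (by omega) (by omega)]
  abel

theorem eventually_sum_Ioc_eq_finsum {f : ℤ → E} (hbot : ∀ᶠ m in atBot, f m = 0)
    (htop : ∀ᶠ m in atTop, f m = 0) : ∀ᶠ M in atTop, ∑ m ∈ Ioc (-M) M, f m = ∑ᶠ m, f m := by
  obtain ⟨B, hB⟩ := eventually_atBot.1 hbot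
  obtain ⟨T, hT⟩ := eventually_atTop.1 htop
  filter_upwards [eventually_ge_atTop (max T (-B))] with M hM
  refine (finsum_eq_finsetSum_of_support_subset f fun m hm => ?_).symm
  by_contra hm'
  rw [coe_Ioc, Set.mem_Ioc, not_and_or, not_lt, not_le] at hm'
  rcases hm' with hm' | hm'
  · exact hm (hB m (by omega))
  · exact hm (hT m (by omega))

theorem eventually_sum_Ioc_ite {P : ℤ → Prop} [DecidablePred P] {c : ℤ}
    (hP : ∀ m, P m ↔ m = c) (f : ℤ → E) :
    ∀ᶠ M in atTop, ∑ m ∈ Ioc (-M) M, (if P m then f m else 0) = f c := by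
  filter_upwards [eventually_gt_atTop |c|] with M hM
  have hc₁ := le_abs_self c
  have hc₂ := neg_abs_le c
  rw [sum_eq_single_of_mem c (mem_Ioc.2 ⟨by omega, by omega⟩)
    fun m _ hm => if_neg ((hP m).not.2 hm), if_pos ((hP c).2 rfl)]

theorem sum_Ioc_neg_ite_pos {K : Type*} [Field K] [CharZero K] {M : ℤ} (hM : 0 ≤ M) :
    ∑ m ∈ Ioc (-M) M, (if 0 < m then (m : K) else 0) = M * (M + 1) / 2 := by
  rw [sum_Ioc_eq_of_eq_zero_of_eq_sub (Φ := fun x : ℤ => (x : K) * (x + 1) / 2) le_rfl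
    (fun m hm => if_neg (by omega)) (fun m hm => ?_) (by omega) hM]
  · simp
  · rw [if_pos hm]
    push_cast
    ring

end IntervalSums

section CurrentAlgebra

variable {g H : Type*} [LieRing g] [LieAlgebra ℂ g] [AddCommGroup H] [Module ℂ H]
  {κ : LinearMap.BilinForm ℂ g} {ℓ : ℂ} {ρ : g → ℤ → Module.End ℂ H}
  (hlinear : ∀ m : ℤ, IsLinearMap ℂ fun X : g => ρ X m)
  (hcomm : ∀ (X Y : g) (m k : ℤ),
    ρ X m * ρ Y k - ρ Y k * ρ X m
      = ρ ⁅X, Y⁆ (m + k)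
        + (if m + k = 0 then (m : ℂ) * κ X Y * ℓ else 0) • (1 : Module.End ℂ H))
  (hsmooth : ∀ (X : g) (v : H), ∃ N : ℤ, ∀ m : ℤ, N ≤ m → ρ X m v = 0)

include hlinear in
theorem rho_sum_apply {ι : Type*} (s : Finset ι) (Y : ι → g) (m : ℤ) (v : H) :
    ρ (∑ i ∈ s, Y i) m v = ∑ i ∈ s, ρ (Y i) m v := by
  change IsLinearMap.mk' _ (hlinear m) _ v = _
  simp [LinearMap.sum_apply]

include hlinear in
theorem rho_smul_apply (t : ℂ) (X : g) (m : ℤ) (v : H) : ρ (t • X) m v = t • ρ X m v := by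
  change IsLinearMap.mk' _ (hlinear m) _ v = _
  simp

include hlinear in
theorem rho_zero_apply (m : ℤ) (v : H) : ρ 0 m v = 0 := by
  simpa using rho_smul_apply hlinear 0 0 m v

include hcomm in
theorem rho_apply_rho_apply (X Y : g) (m k : ℤ) (v : H) :
    ρ X m (ρ Y k v) = ρ Y k (ρ X m v) + ρ ⁅X, Y⁆ (m + k) v
      + (if m + k = 0 then (m : ℂ) * κ X Y * ℓ else 0) • v := by
  have := LinearMap.congr_fun (hcomm X Y m k) v
  simp only [LinearMap.sub_apply, LinearMap.add_apply, Module.End.mul_apply,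
    LinearMap.smul_apply, Module.End.one_apply] at this
  rw [add_assoc, ← this, add_sub_cancel]

include hcomm in
theorem rho_mul_rho_commutator (X Y Z : g) (m n k : ℤ) :
    ρ X m * ρ Y n * ρ Z k - ρ Z k * (ρ X m * ρ Y n)
      = ρ X m * ρ ⁅Y, Z⁆ (n + k) + ρ ⁅X, Z⁆ (m + k) * ρ Y n
        + ((if n + k = 0 then (n : ℂ) * κ Y Z * ℓ else 0) • ρ X m
          + (if m + k = 0 then (m : ℂ) * κ X Z * ℓ else 0) • ρ Y n) := by
  have hleibniz : ρ X m * ρ Y n * ρ Z k - ρ Z k * (ρ X m * ρ Y n)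
      = ρ X m * (ρ Y n * ρ Z k - ρ Z k * ρ Y n) + (ρ X m * ρ Z k - ρ Z k * ρ X m) * ρ Y n := by
    noncomm_ring
  rw [hleibniz, hcomm Y Z n k, hcomm X Z m k]
  simp only [mul_add, add_mul, mul_smul_comm, smul_mul_assoc, mul_one, one_mul]
  abel

include hlinear hsmooth in
theorem eventually_forall_rho_apply_eq_zero [Module.Finite ℂ g] (v : H) :
    ∀ᶠ m in atTop, ∀ X : g, ρ X m v = 0 := by
  let b := Module.finBasis ℂ g
  filter_upwards [eventually_all.2 fun i => eventually_atTop.2 (hsmooth (b i) v)] with m hm X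
  rw [← b.sum_repr X, rho_sum_apply hlinear]
  exact sum_eq_zero fun i _ => by rw [rho_smul_apply hlinear, hm, smul_zero]

variable {d : ℕ}

theorem NOterm_eq_min_max (ρ : g → ℤ → Module.End ℂ H) (J : Fin d → g) (a : Fin d) (m n : ℤ)
    (v : H) : NOterm ρ J a m n v = ρ (J a) (min m (n - m)) (ρ (J a) (max m (n - m)) v) := by
  unfold NOterm
  split_ifs with h
  · rw [min_eq_left h, max_eq_right h]
  · rw [min_eq_right (le_of_not_ge h), max_eq_left (le_of_not_ge h)]

theorem NOterm_eq_zero {J : Fin d → g} {v : H} {N : ℤ} (hN : ∀ a k, N ≤ k → ρ (J a) k v = 0)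
    (a : Fin d) {m n : ℤ} (h : N ≤ max m (n - m)) : NOterm ρ J a m n v = 0 := by
  rw [NOterm_eq_min_max, hN a _ h, map_zero]

include hsmooth in
theorem eventually_sugawara_eq_smul_sum_Ioc (J : Fin d → g) (c : ℂ) (n : ℤ) (v : H) :
    ∀ᶠ M in atTop, sugawara ρ J c n v = c • ∑ m ∈ Ioc (-M) M, ∑ a, NOterm ρ J a m n v := by
  obtain ⟨N, hN⟩ := eventually_atTop.1
    (eventually_all.2 fun a => eventually_atTop.2 (hsmooth (J a) v))
  have hzero (m : ℤ) (h : N ≤ max m (n - m)) : ∑ a, NOterm ρ J a m n v = 0 :=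
    sum_eq_zero fun a _ => NOterm_eq_zero (fun a k hk => hN k hk a) a h
  filter_upwards [eventually_sum_Ioc_eq_finsum
    (eventually_atBot.2 ⟨n - N, fun m hm => hzero m (by omega)⟩)
    (eventually_atTop.2 ⟨N, fun m hm => hzero m (by omega)⟩)] with M hM
  rw [sugawara, hM]

include hsmooth in
theorem isLinearMap_sugawara (J : Fin d → g) (c : ℂ) (n : ℤ) :
    IsLinearMap ℂ (sugawara ρ J c n) where
  map_add v w := by
    obtain ⟨M, hv, hw, hvw⟩ := ((eventually_sugawara_eq_smul_sum_Ioc hsmooth J c n v).and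
      ((eventually_sugawara_eq_smul_sum_Ioc hsmooth J c n w).and
        (eventually_sugawara_eq_smul_sum_Ioc hsmooth J c n (v + w)))).exists
    simp only [hv, hw, hvw, NOterm_eq_min_max, map_add, sum_add_distrib, smul_add]
  map_smul t v := by
    obtain ⟨M, hv, htv⟩ := ((eventually_sugawara_eq_smul_sum_Ioc hsmooth J c n v).and
      (eventually_sugawara_eq_smul_sum_Ioc hsmooth J c n (t • v))).exists
    simp only [hv, htv, NOterm_eq_min_max, map_smul, ← smul_sum, smul_comm c t]

include hsmooth in
theorem eventually_sugawara_sub_eq_sum_Ioc (J : Fin d → g) (T : Module.End ℂ H) (n : ℤ)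
    (v : H) : ∀ᶠ M in atTop, sugawara ρ J 1 n (T v) - T (sugawara ρ J 1 n v)
      = ∑ m ∈ Ioc (-M) M, ∑ a, (NOterm ρ J a m n (T v) - T (NOterm ρ J a m n v)) := by
  filter_upwards [eventually_sugawara_eq_smul_sum_Ioc hsmooth J 1 n v,
    eventually_sugawara_eq_smul_sum_Ioc hsmooth J 1 n (T v)] with M hv hTv
  simp only [hv, hTv, one_smul, map_sum, sum_sub_distrib]

include hlinear hcomm in
theorem NOterm_eq_sub {J : Fin d → g} {a : Fin d} (hJ : κ (J a) (J a) = 1) (m n : ℤ) (v : H) :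
    NOterm ρ J a m n v
      = ρ (J a) m (ρ (J a) (n - m) v) - (if n = 0 ∧ 0 < m then (m : ℂ) * ℓ else 0) • v := by
  by_cases hm : m ≤ n - m
  · rw [NOterm, if_pos hm, if_neg (by omega), zero_smul, sub_zero]
  have hscalar : (if n - m + m = 0 then ((n - m : ℤ) : ℂ) * ℓ else 0)
      = -(if n = 0 ∧ 0 < m then (m : ℂ) * ℓ else 0) := by
    split_ifs with h₁ h₂ h₂
    · obtain rfl : n = 0 := h₂.1
      push_cast
      ring
    all_goals first | omega | simp
  rw [NOterm, if_neg hm, rho_apply_rho_apply hcomm, lie_self, rho_zero_apply hlinear, add_zero, hJ,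
    mul_one, hscalar, neg_smul, ← sub_eq_add_neg]

include hlinear hcomm in
theorem sum_rho_mul_rho_eq_sum_NOterm_add {J : Fin d → g} (hJ : ∀ a, κ (J a) (J a) = 1)
    (m n : ℤ) (v : H) : ∑ a, ρ (J a) m (ρ (J a) (n - m) v)
      = ∑ a, NOterm ρ J a m n v + ((d : ℂ) * (if n = 0 ∧ 0 < m then (m : ℂ) * ℓ else 0)) • v := by
  simp only [NOterm_eq_sub hlinear hcomm (hJ _), sum_sub_distrib, sum_const, card_univ,
    Fintype.card_fin, ← Nat.cast_smul_eq_nsmul ℂ, smul_smul, sub_add_cancel]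

variable {J : Module.Basis (Fin d) ℂ g} {h : ℂ}
  (hsymm : ∀ X Y : g, κ X Y = κ Y X)
  (hinv : ∀ X Y Z : g, κ ⁅X, Y⁆ Z = κ X ⁅Y, Z⁆)
  (hON : ∀ a b : Fin d, κ (J a) (J b) = if a = b then 1 else 0)
  (hCox : ∀ X : g, ∑ a : Fin d, ⁅J a, ⁅J a, X⁆⁆ = (2 * h) • X)

include hinv hCox hlinear hcomm hsmooth in
theorem eventually_sum_rho_mul_rho_lie (Y : g) (n : ℤ) (v : H) :
    ∀ᶠ m in atTop, ∑ a, ρ (J a) m (ρ ⁅J a, Y⁆ (n - m) v) = (2 * h) • ρ Y n v := by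
  filter_upwards [eventually_all.2 fun a => eventually_atTop.2 (hsmooth (J a) v)] with m hm
  simp only [rho_apply_rho_apply hcomm (J _) _ m, hm, map_zero, zero_add, add_sub_cancel,
    bilin_lie_self_right hinv, mul_zero, zero_mul, ite_self, zero_smul, add_zero]
  rw [← rho_sum_apply hlinear, hCox, rho_smul_apply hlinear]

include hsymm hinv hON hlinear hcomm in
theorem sum_NOterm_sub_rho_apply (b : Fin d) (k m n : ℤ) (v : H) :
    ∑ a, (NOterm ρ J a m n (ρ (J b) k v) - ρ (J b) k (NOterm ρ J a m n v))
      = ∑ a, ρ (J a) m (ρ ⁅J a, J b⁆ (n + k - m) v)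
        - ∑ a, ρ (J a) (m + k) (ρ ⁅J a, J b⁆ (n + k - (m + k)) v)
        + ((if m = n + k then ((n - m : ℤ) : ℂ) * ℓ else 0) • ρ (J b) m v
          + (if m = -k then (m : ℂ) * ℓ else 0) • ρ (J b) (n - m) v) := by
  have hterm (a : Fin d) : NOterm ρ J a m n (ρ (J b) k v) - ρ (J b) k (NOterm ρ J a m n v)
      = (ρ (J a) m * ρ (J a) (n - m) * ρ (J b) k
          - ρ (J b) k * (ρ (J a) m * ρ (J a) (n - m))) v := by
    rw [NOterm_eq_sub hlinear hcomm (by simp [hON]), NOterm_eq_sub hlinear hcomm (by simp [hON]),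
      map_sub, map_smul, sub_sub_sub_cancel_right]
    rfl
  have hcasimir := LinearMap.congr_fun (sum_lie_basis_eq_neg hsymm hinv hON
    ((LinearMap.mul ℂ (Module.End ℂ H)).compl₁₂ (IsLinearMap.mk' _ (hlinear (m + k)))
      (IsLinearMap.mk' _ (hlinear (n - m)))) (J b)) v
  simp only [LinearMap.compl₁₂_apply, LinearMap.mul_apply', IsLinearMap.mk'_apply,
    LinearMap.sum_apply, LinearMap.neg_apply, Module.End.mul_apply] at hcasimir
  rw [show n + k - (m + k) = n - m by ring, show n + k - m = n - m + k by ring]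
  simp only [hterm, rho_mul_rho_commutator hcomm, LinearMap.add_apply, LinearMap.smul_apply,
    Module.End.mul_apply, sum_add_distrib, hcasimir]
  have e₁ : (n - m + k = 0) ↔ m = n + k := by omega
  have e₂ : (m + k = 0) ↔ m = -k := by omega
  simp only [e₁, e₂, hON, mul_ite, ite_mul, mul_one, mul_zero, zero_mul, ite_smul, zero_smul]
  split_ifs <;> simp only [sum_ite_eq', mem_univ, if_true, sum_const_zero] <;> abel

include hsymm hinv hON hCox hlinear hcomm hsmooth in
theorem rho_apply_sugawara_sub (b : Fin d) (k n : ℤ) (v : H) :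
    ρ (J b) k (sugawara ρ J 1 n v) - sugawara ρ J 1 n (ρ (J b) k v)
      = (2 * (ℓ + h) * k) • ρ (J b) (n + k) v := by
  have : Module.Finite ℂ g := Module.Finite.of_basis J
  let F (m : ℤ) : H := ∑ a, ρ (J a) m (ρ ⁅J a, J b⁆ (n + k - m) v)
  let C : H := (2 * h) • ρ (J b) (n + k) v
  have hF_bot : ∀ᶠ m in atBot, F m = 0 := by
    obtain ⟨N, hN⟩ := eventually_atTop.1 (eventually_forall_rho_apply_eq_zero hlinear hsmooth v)
    exact eventually_atBot.2 ⟨n + k - N, fun m hm =>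
      sum_eq_zero fun a _ => by rw [hN _ (by omega), map_zero]⟩
  have hF_top : ∀ᶠ m in atTop, F m = m • C - (m - 1) • C := by
    filter_upwards [eventually_sum_rho_mul_rho_lie hlinear hcomm hsmooth hinv hCox
      (J b) (n + k) v] with m hm
    rw [← sub_smul, sub_sub_cancel, one_smul]
    exact hm
  have hterm (m : ℤ) :
      ∑ a, (NOterm ρ J a m n (ρ (J b) k v) - ρ (J b) k (NOterm ρ J a m n v))
        = F m - F (m + k) + ((if m = n + k then ((n - m : ℤ) : ℂ) * ℓ else 0) • ρ (J b) m v
          + (if m = -k then (m : ℂ) * ℓ else 0) • ρ (J b) (n - m) v) :=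
    sum_NOterm_sub_rho_apply hlinear hcomm hsymm hinv hON b k m n v
  obtain ⟨M, hwindow, hshift, hδ₁, hδ₂⟩ :=
    ((eventually_sugawara_sub_eq_sum_Ioc hsmooth J (ρ (J b) k) n v).and
    ((eventually_sum_Ioc_comp_add_sub hF_bot hF_top k).and
    ((eventually_sum_Ioc_ite (c := n + k) (fun _ => Iff.rfl)
      fun m => (((n - m : ℤ) : ℂ) * ℓ) • ρ (J b) m v).and
    (eventually_sum_Ioc_ite (c := -k) (fun _ => Iff.rfl)
      fun m => ((m : ℂ) * ℓ) • ρ (J b) (n - m) v)))).exists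
  rw [← neg_sub, hwindow]
  simp only [hterm, sum_add_distrib, sum_sub_distrib, ite_smul, zero_smul, hδ₁, hδ₂]
  rw [← neg_sub (∑ m ∈ Ioc (-M) M, F (m + k)), hshift, neg_add, neg_neg, ← sub_eq_add_neg,
    ← sub_smul, add_sub_cancel_left, sub_neg_eq_add, ← Int.cast_smul_eq_zsmul ℂ, smul_smul,
    ← add_smul, ← sub_smul]
  congr 1
  push_cast
  ring

include hsymm hinv hON hCox hlinear hcomm hsmooth in
theorem NOterm_sugawara_sub (a : Fin d) (m p q : ℤ) (v : H) :
    NOterm ρ J a m p (sugawara ρ J 1 q v) - sugawara ρ J 1 q (NOterm ρ J a m p v)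
      = (2 * (ℓ + h)) • (((p - m : ℤ) : ℂ) • ρ (J a) m (ρ (J a) (p + q - m) v)
        + (m : ℂ) • ρ (J a) (m + q) (ρ (J a) (p - m) v)) := by
  have hS := isLinearMap_sugawara hsmooth J 1 q
  have hcomm_S (k : ℤ) (w : H) : ρ (J a) k (sugawara ρ J 1 q w)
      = sugawara ρ J 1 q (ρ (J a) k w) + (2 * (ℓ + h) * k) • ρ (J a) (q + k) w :=
    sub_eq_iff_eq_add'.1 (rho_apply_sugawara_sub hlinear hcomm hsmooth hsymm hinv hON hCox a k q w)
  have hJ : κ (J a) (J a) = 1 := by simp [hON]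
  rw [NOterm_eq_sub hlinear hcomm hJ, NOterm_eq_sub hlinear hcomm hJ, hS.map_sub, hS.map_smul,
    sub_sub_sub_cancel_right, hcomm_S, map_add, map_smul, hcomm_S,
    show q + (p - m) = p + q - m by ring, show q + m = m + q by ring]
  module

include hON hlinear hcomm hsmooth in
theorem eventually_sum_rho_mul_rho (n : ℤ) (v : H) :
    ∀ᶠ m in atTop, ∑ a, ρ (J a) m (ρ (J a) (n - m) v)
      = ((d : ℂ) * (if n = 0 then (m : ℂ) * ℓ else 0)) • v := by
  filter_upwards [eventually_all.2 fun a => eventually_atTop.2 (hsmooth (J a) v)] with m hm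
  simp only [rho_apply_rho_apply hcomm (J _) (J _) m, hm, map_zero, zero_add, lie_self,
    rho_zero_apply hlinear, add_sub_cancel, hON, if_true, mul_one]
  rw [sum_const, card_univ, Fintype.card_fin, ← Nat.cast_smul_eq_nsmul ℂ, smul_smul]

include hON hlinear hcomm hsmooth in
theorem eventually_sum_Ioc_smul_sum_rho_mul_rho_add_sub (n q : ℤ) (v : H) :
    ∀ᶠ M in atTop,
      ∑ m ∈ Ioc (-M) M, ((m : ℤ) : ℂ) • ∑ a, ρ (J a) (m + q) (ρ (J a) (n - (m + q)) v)
        - ∑ m ∈ Ioc (-M) M, ((m - q : ℤ) : ℂ) • ∑ a, ρ (J a) m (ρ (J a) (n - m) v)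
      = ((d : ℂ) * ℓ * (if n = 0 then ((q : ℂ) - q ^ 3) / 6 + q * M * (M + 1) else 0)) • v := by
  let f (m : ℤ) : H := ((m - q : ℤ) : ℂ) • ∑ a, ρ (J a) m (ρ (J a) (n - m) v)
  -- `Φ x - Φ (x - 1) = (x - q) x`, times `d ℓ δₙ₀ v`
  let Φ (x : ℤ) : H := ((d : ℂ) * ℓ *
    (if n = 0 then (x : ℂ) * (x + 1) * (2 * x + 1) / 6 - q * x * (x + 1) / 2 else 0)) • v
  have hf_bot : ∀ᶠ m in atBot, f m = 0 := by
    obtain ⟨N, hN⟩ := eventually_atTop.1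
      (eventually_all.2 fun a => eventually_atTop.2 (hsmooth (J a) v))
    exact eventually_atBot.2 ⟨n - N, fun m hm => by
      simp only [f, hN (n - m) (by omega), map_zero, sum_const_zero, smul_zero]⟩
  have hf_top : ∀ᶠ m in atTop, f m = Φ m - Φ (m - 1) := by
    filter_upwards [eventually_sum_rho_mul_rho hlinear hcomm hsmooth hON n v] with m hm
    simp only [f, Φ, hm, smul_smul, ← sub_smul]
    congr 1
    split_ifs <;> push_cast <;> ring
  filter_upwards [eventually_sum_Ioc_comp_add_sub hf_bot hf_top q] with M hM
  simp only [f, Φ, add_sub_cancel_right, ← sub_smul] at hM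
  rw [hM]
  congr 1
  split_ifs <;> push_cast <;> ring

include hsymm hinv hON hCox hlinear hcomm hsmooth in
theorem sugawara_sugawara_sub (p q : ℤ) (v : H) :
    sugawara ρ J 1 p (sugawara ρ J 1 q v) - sugawara ρ J 1 q (sugawara ρ J 1 p v)
      = (2 * (ℓ + h)) • (((p : ℂ) - q) • sugawara ρ J 1 (p + q) v
        + (if p + q = 0 then ℓ * d * ((p : ℂ) ^ 3 - p) / 6 else 0) • v) := by
  let G (m : ℤ) : H := ∑ a, ρ (J a) m (ρ (J a) (p + q - m) v)
  have hterm (m : ℤ) :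
      ∑ a, (NOterm ρ J a m p (sugawara ρ J 1 q v) - sugawara ρ J 1 q (NOterm ρ J a m p v))
        = (2 * (ℓ + h)) • (((p - m : ℤ) : ℂ) • G m + (m : ℂ) • G (m + q)) := by
    simp only [NOterm_sugawara_sub hlinear hcomm hsmooth hsymm hinv hON hCox, ← smul_sum,
      sum_add_distrib, G, show p + q - (m + q) = p - m by ring]
  obtain ⟨M, hM, hwindow, hSpq, hshift⟩ := ((eventually_ge_atTop 0).and
    ((eventually_sugawara_sub_eq_sum_Ioc hsmooth J
      (IsLinearMap.mk' _ (isLinearMap_sugawara hsmooth J 1 q)) p v).and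
    ((eventually_sugawara_eq_smul_sum_Ioc hsmooth J 1 (p + q) v).and
    (eventually_sum_Ioc_smul_sum_rho_mul_rho_add_sub hlinear hcomm hsmooth hON
      (p + q) q v)))).exists
  simp only [IsLinearMap.mk'_apply] at hwindow
  rw [one_smul] at hSpq
  rw [hwindow, sum_congr rfl fun m _ => hterm m, ← smul_sum, sum_add_distrib,
    ← sub_add_cancel (∑ m ∈ Ioc (-M) M, ((m : ℤ) : ℂ) • G (m + q)), hshift, ← add_assoc,
    add_right_comm, ← sum_add_distrib]
  simp only [G, ← add_smul, show ∀ m : ℤ, ((p - m : ℤ) : ℂ) + ((m - q : ℤ) : ℂ) = p - q by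
      intro m; push_cast; ring, ← smul_sum,
    sum_rho_mul_rho_eq_sum_NOterm_add hlinear hcomm (J := J) (by simp [hON]),
    sum_add_distrib, ← hSpq, ← sum_smul, ← mul_sum]
  by_cases hpq : p + q = 0
  · simp only [hpq, true_and, if_true, ← ite_zero_mul, ← sum_mul, sum_Ioc_neg_ite_pos hM]
    obtain rfl : p = -q := by omega
    push_cast
    module
  · simp only [hpq, false_and, if_false, sum_const_zero, mul_zero, zero_smul]
    module

end CurrentAlgebra

theorem sugawara_virasoro_relations_general {g H : Type*} [LieRing g] [LieAlgebra ℂ g]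
    [AddCommGroup H] [Module ℂ H]
    (κ : LinearMap.BilinForm ℂ g)
    (hsymm : ∀ X Y : g, κ X Y = κ Y X)
    (hinv : ∀ X Y Z : g, κ ⁅X, Y⁆ Z = κ X ⁅Y, Z⁆)
    {d : ℕ} (J : Module.Basis (Fin d) ℂ g)
    (hON : ∀ a b : Fin d, κ (J a) (J b) = if a = b then 1 else 0)
    (ℓ h : ℂ)
    (hCox : ∀ X : g, ∑ a : Fin d, ⁅J a, ⁅J a, X⁆⁆ = (2 * h) • X)
    (ρ : g → ℤ → Module.End ℂ H)
    (hlinear : ∀ m : ℤ, IsLinearMap ℂ fun X : g => ρ X m)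
    (hcomm : ∀ (X Y : g) (m k : ℤ),
      ρ X m * ρ Y k - ρ Y k * ρ X m
        = ρ ⁅X, Y⁆ (m + k)
          + (if m + k = 0 then (m : ℂ) * κ X Y * ℓ else 0) • (1 : Module.End ℂ H))
    (hsmooth : ∀ (X : g) (v : H), ∃ N : ℤ, ∀ m : ℤ, N ≤ m → ρ X m v = 0) :
    ∀ (p q : ℤ) (v : H),
      sugawara ρ (fun a => J a) (2 * (ℓ + h))⁻¹ p
          (sugawara ρ (fun a => J a) (2 * (ℓ + h))⁻¹ q v)
        - sugawara ρ (fun a => J a) (2 * (ℓ + h))⁻¹ q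
            (sugawara ρ (fun a => J a) (2 * (ℓ + h))⁻¹ p v)
      = ((p : ℂ) - (q : ℂ)) • sugawara ρ (fun a => J a) (2 * (ℓ + h))⁻¹ (p + q) v
        + (if p + q = 0 then ℓ * (d : ℂ) / (ℓ + h) / 12 * ((p : ℂ) ^ 3 - (p : ℂ))
            else 0) • v := by
  intro p q v
  have hsugawara (n : ℤ) (w : H) : sugawara ρ (fun a => J a) (2 * (ℓ + h))⁻¹ n w
      = (2 * (ℓ + h))⁻¹ • sugawara ρ J 1 n w := by
    rw [sugawara, sugawara, one_smul]
  have hc : (2 * (ℓ + h))⁻¹ * (2 * (ℓ + h))⁻¹ * (2 * (ℓ + h)) = (2 * (ℓ + h))⁻¹ := by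
    rcases eq_or_ne (ℓ + h) 0 with hl | hl
    · simp [hl]
    · field_simp
  simp only [hsugawara, (isLinearMap_sugawara hsmooth J 1 p).map_smul,
    (isLinearMap_sugawara hsmooth J 1 q).map_smul, ← smul_sub,
    sugawara_sugawara_sub hlinear hcomm hsmooth hsymm hinv hON hCox]
  match_scalars
  · linear_combination (↑p - ↑q : ℂ) * hc
  · split_ifs
    · rw [mul_inv] at hc ⊢
      linear_combination (ℓ * d * ((p : ℂ) ^ 3 - p) / 6) * hc
    · simp

/-- The Virasoro relations for the Sugawara operators. -/
theorem sugawara_virasoro_relations {g H : Type*} [LieRing g] [LieAlgebra ℂ g]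
    [AddCommGroup H] [Module ℂ H]
    (κ : LinearMap.BilinForm ℂ g)
    (hsymm : ∀ X Y : g, κ X Y = κ Y X)
    (hinv : ∀ X Y Z : g, κ ⁅X, Y⁆ Z = κ X ⁅Y, Z⁆)
    {d : ℕ} (J : Module.Basis (Fin d) ℂ g)
    (hON : ∀ a b : Fin d, κ (J a) (J b) = if a = b then 1 else 0)
    (ℓ h : ℂ) (hlev : ℓ + h ≠ 0)
    (hCox : ∀ X : g, ∑ a : Fin d, ⁅J a, ⁅J a, X⁆⁆ = (2 * h) • X)
    (ρ : g → ℤ → Module.End ℂ H)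
    (hlinear : ∀ m : ℤ, IsLinearMap ℂ fun X : g => ρ X m)
    (hcomm : ∀ (X Y : g) (m k : ℤ),
      ρ X m * ρ Y k - ρ Y k * ρ X m
        = ρ ⁅X, Y⁆ (m + k)
          + (if m + k = 0 then (m : ℂ) * κ X Y * ℓ else 0) • (1 : Module.End ℂ H))
    (hsmooth : ∀ (X : g) (v : H), ∃ N : ℤ, ∀ m : ℤ, N ≤ m → ρ X m v = 0) :
    ∀ (p q : ℤ) (v : H),
      sugawara ρ (fun a => J a) (2 * (ℓ + h))⁻¹ p
          (sugawara ρ (fun a => J a) (2 * (ℓ + h))⁻¹ q v)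
        - sugawara ρ (fun a => J a) (2 * (ℓ + h))⁻¹ q
            (sugawara ρ (fun a => J a) (2 * (ℓ + h))⁻¹ p v)
      = ((p : ℂ) - (q : ℂ)) • sugawara ρ (fun a => J a) (2 * (ℓ + h))⁻¹ (p + q) v
        + (if p + q = 0 then ℓ * (d : ℂ) / (ℓ + h) / 12 * ((p : ℂ) ^ 3 - (p : ℂ))
            else 0) • v :=
  sugawara_virasoro_relations_general κ hsymm hinv J hON ℓ h hCox ρ hlinear hcomm hsmooth
end

section
/- Let g be a finite-dimensional complex Lie algebra with invariant bilinear form κ and orthonormal basis {J^a}, and let V_1, ..., V_n be g-modules. Define Ω_{ij} on V_1⊗...⊗V_n (i ≠ j) by acting with J^a on the i-th and j-th factors and summing over a. Then for pairwise distinct indices i, j, k, l: (a) [Ω_{ij}, Ω_{kl}] = 0, and (b) [Ω_{ij}, Ω_{ik} + Ω_{jk}] = 0. -/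
/-!
STATEMENT 9: Let `g` be a finite-dimensional complex Lie algebra with invariant form
`κ` and orthonormal basis `{Jᵃ}`, and `V₁,...,Vₙ` be `g`-modules. Define `Ω_{ij}`
on `V₁⊗...⊗Vₙ` (for `i ≠ j`) by acting with `Jᵃ` on the `i`-th and `j`-th factors
and summing over `a`. Then for pairwise distinct `i,j,k,l`:
(a) `[Ω_{ij}, Ω_{kl}] = 0`, and (b) `[Ω_{ij}, Ω_{ik} + Ω_{jk}] = 0`.
-/

open scoped TensorProduct

/-- The action of `X ∈ g` on the `i`-th factor of `V₁ ⊗ ... ⊗ Vₙ`. -/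
noncomputable def actOn {𝔤 : Type*} [LieRing 𝔤] [LieAlgebra ℂ 𝔤]
    {n : ℕ} {V : Fin n → Type*} [∀ i, AddCommGroup (V i)] [∀ i, Module ℂ (V i)]
    (ρ : ∀ i, 𝔤 →ₗ[ℂ] Module.End ℂ (V i)) (i : Fin n) (X : 𝔤) :
    (⨂[ℂ] j, V j) →ₗ[ℂ] ⨂[ℂ] j, V j :=
  PiTensorProduct.map
    (Function.update (fun j => (LinearMap.id : V j →ₗ[ℂ] V j)) i (ρ i X))

/-- The operator `Ω_{ij} = ∑_a Jᵃ⁽ⁱ⁾ Jᵃ⁽ʲ⁾` on `V₁ ⊗ ... ⊗ Vₙ`. -/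
noncomputable def casimirPair {𝔤 : Type*} [LieRing 𝔤] [LieAlgebra ℂ 𝔤]
    {n : ℕ} {V : Fin n → Type*} [∀ i, AddCommGroup (V i)] [∀ i, Module ℂ (V i)]
    (ρ : ∀ i, 𝔤 →ₗ[ℂ] Module.End ℂ (V i)) {d : ℕ} (J : Fin d → 𝔤)
    (i j : Fin n) (t : ⨂[ℂ] k, V k) : ⨂[ℂ] k, V k :=
  ∑ a : Fin d, actOn ρ i (J a) (actOn ρ j (J a) t)

/-!
Operators acting on disjoint tensor factors commute, which gives (a). For (b), write
`Ω_{ik} + Ω_{jk} = ∑_b (Jᵇ⁽ⁱ⁾ + Jᵇ⁽ʲ⁾) Jᵇ⁽ᵏ⁾`: it suffices that `Ω_{ij}` commutes with the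
diagonal action `X⁽ⁱ⁾ + X⁽ʲ⁾` of `g`. That is the ad-invariance of the Casimir tensor
`∑_a Jᵃ ⊗ Jᵃ`: expanded in the orthonormal basis, the two halves of `ad_X (∑_a Jᵃ ⊗ Jᵃ)`
cancel because invariance of `κ` gives `κ(Jᶜ, [Jᵃ, X]) = -κ([Jᶜ, X], Jᵃ)`.
-/

namespace PiTensorProduct

variable {R ι : Type*} [CommSemiring R] [DecidableEq ι] {s : ι → Type*}
  [∀ i, AddCommMonoid (s i)] [∀ i, Module R (s i)]

noncomputable def mapAt (i : ι) : Module.End R (s i) →ₐ[R] Module.End R (⨂[R] j, s j) :=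
  AlgHom.ofLinearMap ((mapMultilinear R s s).toLinearMap 1 i)
    (by
      change map (Pi.mulSingle i 1) = 1
      rw [Pi.mulSingle_one]
      exact PiTensorProduct.map_one)
    fun f g => by
      change map (Pi.mulSingle i (f * g)) = map (Pi.mulSingle i f) * map (Pi.mulSingle i g)
      rw [Pi.mulSingle_mul]
      exact PiTensorProduct.map_mul _ _

theorem mapAt_apply (i : ι) (f : Module.End R (s i)) :
    mapAt i f = map (Pi.mulSingle i f) := by
  simp [mapAt, Pi.mulSingle]

theorem commute_mapAt {i j : ι} (hij : i ≠ j) (f : Module.End R (s i))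
    (g : Module.End R (s j)) : Commute (mapAt i f) (mapAt j g) := by
  rw [mapAt_apply, mapAt_apply]
  exact (Pi.mulSingle_commute (f := fun k => Module.End R (s k)) hij f g).map
    (mapMonoidHom (R := R) (s := s))

end PiTensorProduct

namespace LinearMap.BilinForm

section Orthonormal

variable {R M ι : Type*} [CommSemiring R] [AddCommMonoid M] [Module R M] [DecidableEq ι]
  {κ : LinearMap.BilinForm R M} {J : Module.Basis ι R M}

theorem apply_basis_eq_repr (hON : ∀ a b, κ (J a) (J b) = if a = b then 1 else 0)
    (Y : M) (c : ι) : κ Y (J c) = J.repr Y c :=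
  LinearMap.congr_fun
    (J.ext fun b => by simp [hON, Finsupp.single_apply] : κ.flip (J c) = J.coord c) Y

theorem basis_apply_eq_repr (hON : ∀ a b, κ (J a) (J b) = if a = b then 1 else 0)
    (Y : M) (c : ι) : κ (J c) Y = J.repr Y c :=
  LinearMap.congr_fun
    (J.ext fun b => by simp [hON, Finsupp.single_apply, eq_comm] : κ (J c) = J.coord c) Y

variable [Fintype ι]

theorem sum_apply_basis_smul (hON : ∀ a b, κ (J a) (J b) = if a = b then 1 else 0) (Y : M) :
    ∑ c, κ Y (J c) • J c = Y := by
  simp only [apply_basis_eq_repr hON, J.sum_repr]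

theorem sum_basis_apply_smul (hON : ∀ a b, κ (J a) (J b) = if a = b then 1 else 0) (Y : M) :
    ∑ c, κ (J c) Y • J c = Y := by
  simp only [basis_apply_eq_repr hON, J.sum_repr]

end Orthonormal

/-- The ad-invariance of the Casimir tensor `∑ₐ Jᵃ ⊗ Jᵃ`, read through the bilinear map `B`. -/
theorem sum_apply_lie_basis_add_eq_zero {R L M ι : Type*} [CommRing R] [LieRing L]
    [LieAlgebra R L] [AddCommGroup M] [Module R M] [Fintype ι] [DecidableEq ι]
    {κ : LinearMap.BilinForm R L} {J : Module.Basis ι R L}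
    (hinv : ∀ X Y Z : L, κ ⁅X, Y⁆ Z = κ X ⁅Y, Z⁆)
    (hON : ∀ a b, κ (J a) (J b) = if a = b then 1 else 0) (B : L →ₗ[R] L →ₗ[R] M) (X : L) :
    ∑ a, (B ⁅J a, X⁆ (J a) + B (J a) ⁅J a, X⁆) = 0 := by
  have expand_left (a : ι) : B ⁅J a, X⁆ (J a) = ∑ c, κ (J c) ⁅J a, X⁆ • B (J c) (J a) := by
    conv_lhs => rw [← sum_basis_apply_smul hON ⁅J a, X⁆]
    simp only [map_sum, map_smul, LinearMap.sum_apply, LinearMap.smul_apply]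
  have expand_right (a : ι) : B (J a) ⁅J a, X⁆ = ∑ c, κ ⁅J a, X⁆ (J c) • B (J a) (J c) := by
    conv_lhs => rw [← sum_apply_basis_smul hON ⁅J a, X⁆]
    simp only [map_sum, map_smul]
  rw [Finset.sum_add_distrib, Fintype.sum_congr _ _ expand_left,
    Fintype.sum_congr _ _ expand_right,
    Finset.sum_comm (γ := ι) (f := fun a c => κ ⁅J a, X⁆ (J c) • B (J a) (J c)),
    ← Finset.sum_add_distrib]
  refine Fintype.sum_eq_zero _ fun a => ?_
  rw [← Finset.sum_add_distrib]
  refine Fintype.sum_eq_zero _ fun c => ?_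
  rw [hinv, ← lie_skew, map_neg, neg_smul, neg_add_cancel]

end LinearMap.BilinForm

theorem commutator_mul_add_of_commute {A : Type*} [Ring A] {P Q U W : A} (hQU : Commute Q U)
    (hPW : Commute P W) :
    P * Q * (U + W) - (U + W) * (P * Q) = (P * U - U * P) * Q + P * (Q * W - W * Q) := by
  calc _ = P * (Q * U) + P * Q * W - U * P * Q - W * P * Q := by noncomm_ring
    _ = P * (U * Q) + P * Q * W - U * P * Q - P * W * Q := by rw [hQU.eq, hPW.eq]
    _ = _ := by noncomm_ring

section PairCasimir

variable {R L A ι σ : Type*} [CommRing R] [LieRing L] [LieAlgebra R L] [Ring A] [Algebra R A]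
  [Fintype ι]

def pairCasimir (π : σ → L →ₗ[R] A) (J : ι → L) (i j : σ) : A :=
  ∑ a, π i (J a) * π j (J a)

variable {π : σ → L →ₗ[R] A}

theorem commute_pairCasimir_of_commute {J : ι → L} {x : A} {i j : σ}
    (hi : ∀ X, Commute (π i X) x) (hj : ∀ X, Commute (π j X) x) :
    Commute (pairCasimir π J i j) x :=
  Commute.sum_left _ _ _ fun a _ => (hi (J a)).mul_left (hj (J a))

theorem commute_pairCasimir_pairCasimir
    (hπ : Pairwise fun i j => ∀ X Y, Commute (π i X) (π j Y)) {J : ι → L} {i j k l : σ}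
    (hik : i ≠ k) (hil : i ≠ l) (hjk : j ≠ k) (hjl : j ≠ l) :
    Commute (pairCasimir π J i j) (pairCasimir π J k l) :=
  Commute.sum_right _ _ _ fun _ _ => commute_pairCasimir_of_commute
    (fun X => (hπ hik X _).mul_right (hπ hil X _))
    (fun X => (hπ hjk X _).mul_right (hπ hjl X _))

variable [DecidableEq ι] {κ : LinearMap.BilinForm R L} {J : Module.Basis ι R L}

theorem commute_pairCasimir_add
    (hrep : ∀ i X Y, π i ⁅X, Y⁆ = π i X * π i Y - π i Y * π i X)
    (hπ : Pairwise fun i j => ∀ X Y, Commute (π i X) (π j Y))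
    (hinv : ∀ X Y Z : L, κ ⁅X, Y⁆ Z = κ X ⁅Y, Z⁆)
    (hON : ∀ a b, κ (J a) (J b) = if a = b then 1 else 0) {i j : σ} (hij : i ≠ j) (X : L) :
    Commute (pairCasimir π J i j) (π i X + π j X) := by
  rw [commute_iff_eq, ← sub_eq_zero, pairCasimir, Finset.sum_mul, Finset.mul_sum,
    ← Finset.sum_sub_distrib]
  calc ∑ a, (π i (J a) * π j (J a) * (π i X + π j X) - (π i X + π j X) * (π i (J a) * π j (J a)))
      = ∑ a, ((LinearMap.mul R A).compl₁₂ (π i) (π j) ⁅J a, X⁆ (J a)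
          + (LinearMap.mul R A).compl₁₂ (π i) (π j) (J a) ⁅J a, X⁆) := by
        refine Fintype.sum_congr _ _ fun a => ?_
        rw [commutator_mul_add_of_commute (hπ hij X (J a)).symm (hπ hij (J a) X), ← hrep, ← hrep]
        rfl
    _ = 0 := LinearMap.BilinForm.sum_apply_lie_basis_add_eq_zero hinv hON _ X

theorem commute_pairCasimir_add_pairCasimir
    (hrep : ∀ i X Y, π i ⁅X, Y⁆ = π i X * π i Y - π i Y * π i X)
    (hπ : Pairwise fun i j => ∀ X Y, Commute (π i X) (π j Y))
    (hinv : ∀ X Y Z : L, κ ⁅X, Y⁆ Z = κ X ⁅Y, Z⁆)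
    (hON : ∀ a b, κ (J a) (J b) = if a = b then 1 else 0) {i j k : σ}
    (hij : i ≠ j) (hik : i ≠ k) (hjk : j ≠ k) :
    Commute (pairCasimir π J i j) (pairCasimir π J i k + pairCasimir π J j k) := by
  have hsum : pairCasimir π J i k + pairCasimir π J j k
      = ∑ b, (π i (J b) + π j (J b)) * π k (J b) := by
    simp only [pairCasimir, ← Finset.sum_add_distrib, add_mul]
  rw [hsum]
  refine Commute.sum_right _ _ _ fun b _ => ?_
  exact (commute_pairCasimir_add hrep hπ hinv hON hij (J b)).mul_right
    (commute_pairCasimir_of_commute (hπ hik · _) (hπ hjk · _))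

end PairCasimir

theorem actOn_eq_mapAt {𝔤 : Type*} [LieRing 𝔤] [LieAlgebra ℂ 𝔤]
    {n : ℕ} {V : Fin n → Type*} [∀ i, AddCommGroup (V i)] [∀ i, Module ℂ (V i)]
    (ρ : ∀ i, 𝔤 →ₗ[ℂ] Module.End ℂ (V i)) (i : Fin n) (X : 𝔤) :
    actOn ρ i X = PiTensorProduct.mapAt i (ρ i X) :=
  rfl

theorem infinitesimal_braid_relations_general {𝔤 : Type*} [LieRing 𝔤] [LieAlgebra ℂ 𝔤]
    (κ : LinearMap.BilinForm ℂ 𝔤)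
    (hinv : ∀ X Y Z : 𝔤, κ ⁅X, Y⁆ Z = κ X ⁅Y, Z⁆)
    {d : ℕ} (J : Module.Basis (Fin d) ℂ 𝔤)
    (hON : ∀ a b : Fin d, κ (J a) (J b) = if a = b then 1 else 0)
    {n : ℕ} {V : Fin n → Type*} [∀ i, AddCommGroup (V i)] [∀ i, Module ℂ (V i)]
    (ρ : ∀ i, 𝔤 →ₗ[ℂ] Module.End ℂ (V i))
    (hrep : ∀ (i : Fin n) (X Y : 𝔤), ρ i ⁅X, Y⁆ = ρ i X * ρ i Y - ρ i Y * ρ i X)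
    (i j k l : Fin n) (hij : i ≠ j) (hik : i ≠ k) (hil : i ≠ l)
    (hjk : j ≠ k) (hjl : j ≠ l) :
    (∀ t : ⨂[ℂ] m, V m,
        casimirPair ρ (fun a => J a) i j (casimirPair ρ (fun a => J a) k l t)
          = casimirPair ρ (fun a => J a) k l (casimirPair ρ (fun a => J a) i j t)) ∧
    (∀ t : ⨂[ℂ] m, V m,
        casimirPair ρ (fun a => J a) i j
            (casimirPair ρ (fun a => J a) i k t + casimirPair ρ (fun a => J a) j k t)
          = casimirPair ρ (fun a => J a) i k (casimirPair ρ (fun a => J a) i j t)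
            + casimirPair ρ (fun a => J a) j k (casimirPair ρ (fun a => J a) i j t)) := by
  let π (m : Fin n) : 𝔤 →ₗ[ℂ] Module.End ℂ (⨂[ℂ] m, V m) :=
    (PiTensorProduct.mapAt m).toLinearMap ∘ₗ ρ m
  have hπrep : ∀ m X Y, π m ⁅X, Y⁆ = π m X * π m Y - π m Y * π m X := fun m X Y => by
    simp [π, hrep]
  have hπcomm : Pairwise fun m m' => ∀ X Y, Commute (π m X) (π m' Y) :=
    fun _ _ hmm' _ _ => PiTensorProduct.commute_mapAt hmm' _ _
  have hΩ : ∀ m m' t, casimirPair ρ (fun a => J a) m m' t = pairCasimir π J m m' t := by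
    intro m m' t
    simp [casimirPair, pairCasimir, LinearMap.sum_apply, actOn_eq_mapAt, π]
  refine ⟨fun t => ?_, fun t => ?_⟩
  · simp only [hΩ, ← Module.End.mul_apply,
      (commute_pairCasimir_pairCasimir hπcomm hik hil hjk hjl).eq]
  · simp only [hΩ, ← LinearMap.add_apply, ← Module.End.mul_apply,
      (commute_pairCasimir_add_pairCasimir hπrep hπcomm hinv hON hij hik hjk).eq, add_mul]

/-- The infinitesimal pure braid relations for the operators `Ω_{ij}`. -/
theorem infinitesimal_braid_relations {𝔤 : Type*} [LieRing 𝔤] [LieAlgebra ℂ 𝔤]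
    [FiniteDimensional ℂ 𝔤] (κ : LinearMap.BilinForm ℂ 𝔤)
    (hsymm : ∀ X Y : 𝔤, κ X Y = κ Y X)
    (hinv : ∀ X Y Z : 𝔤, κ ⁅X, Y⁆ Z = κ X ⁅Y, Z⁆)
    {d : ℕ} (J : Module.Basis (Fin d) ℂ 𝔤)
    (hON : ∀ a b : Fin d, κ (J a) (J b) = if a = b then 1 else 0)
    {n : ℕ} {V : Fin n → Type*} [∀ i, AddCommGroup (V i)] [∀ i, Module ℂ (V i)]
    (ρ : ∀ i, 𝔤 →ₗ[ℂ] Module.End ℂ (V i))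
    (hrep : ∀ (i : Fin n) (X Y : 𝔤), ρ i ⁅X, Y⁆ = ρ i X * ρ i Y - ρ i Y * ρ i X)
    (i j k l : Fin n) (hij : i ≠ j) (hik : i ≠ k) (hil : i ≠ l)
    (hjk : j ≠ k) (hjl : j ≠ l) (hkl : k ≠ l) :
    (∀ t : ⨂[ℂ] m, V m,
        casimirPair ρ (fun a => J a) i j (casimirPair ρ (fun a => J a) k l t)
          = casimirPair ρ (fun a => J a) k l (casimirPair ρ (fun a => J a) i j t)) ∧
    (∀ t : ⨂[ℂ] m, V m,
        casimirPair ρ (fun a => J a) i j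
            (casimirPair ρ (fun a => J a) i k t + casimirPair ρ (fun a => J a) j k t)
          = casimirPair ρ (fun a => J a) i k (casimirPair ρ (fun a => J a) i j t)
            + casimirPair ρ (fun a => J a) j k (casimirPair ρ (fun a => J a) i j t)) :=
  infinitesimal_braid_relations_general κ hinv J hON ρ hrep i j k l hij hik hil hjk hjl
end
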